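/- arXiv:math/0312029 — 7 statements merged into one kernel-verified Lean document; each statement's English description precedes it below -/
import Mathlib

section
/- Let f ∈ C_K[z] be a non-constant polynomial and let D̄_r(c) be a closed disk (r > 0). Then the image f(D̄_r(c)) is a closed disk centered at f(c): there exists s > 0 such that f(D̄_r(c)) = D̄_s(f(c)). -/
open Polynomial IsUltrametricDist

/-- Key lemma: if some coefficient `k ≥ 1` satisfies `‖g 0‖ ≤ ‖g k‖ r^k`, then `g` has a
root of norm at most `r`. -/
lemma exists_root_norm_le
    {K : Type*} [NontriviallyNormedField K] [IsUltrametricDist K] [IsAlgClosed K]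
    (r : ℝ) (hr : 0 < r) :
    ∀ n (g : Polynomial K), g.natDegree ≤ n →
      (∃ k, 1 ≤ k ∧ ‖g.coeff 0‖ ≤ ‖g.coeff k‖ * r ^ k) →
      ∃ z : K, ‖z‖ ≤ r ∧ g.eval z = 0 := by
  intro n
  induction n with
  | zero =>
    intro g hg ⟨k, hk1, hk⟩
    have hck : g.coeff k = 0 := by
      apply Polynomial.coeff_eq_zero_of_natDegree_lt
      omega
    rw [hck, norm_zero, zero_mul] at hk
    have h0 : g.coeff 0 = 0 := by
      have := norm_nonneg (g.coeff 0)
      have : ‖g.coeff 0‖ = 0 := le_antisymm hk this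
      simpa using this
    refine ⟨0, by simpa using hr.le, ?_⟩
    have : g = Polynomial.C (g.coeff 0) := Polynomial.eq_C_of_natDegree_le_zero hg
    rw [this, h0]; simp
  | succ n ih =>
    intro g hg hex
    by_cases hgn : g.natDegree ≤ n
    · exact ih g hgn hex
    have hdeg : g.natDegree = n + 1 := by omega
    have hg0 : g ≠ 0 := fun h => by simp [h] at hdeg
    have hdeg' : g.degree ≠ 0 := by
      rw [Polynomial.degree_eq_natDegree hg0, hdeg]
      exact_mod_cast Nat.succ_ne_zero n
    obtain ⟨z1, hz1⟩ := IsAlgClosed.exists_root g hdeg'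
    by_cases hz1r : ‖z1‖ ≤ r
    · exact ⟨z1, hz1r, hz1⟩
    push_neg at hz1r
    obtain ⟨h, hgh⟩ := (Polynomial.dvd_iff_isRoot.mpr hz1)
    have hh0 : h ≠ 0 := by
      rintro rfl; simp at hgh; exact hg0 hgh
    have hXz : (Polynomial.X - Polynomial.C z1) ≠ 0 := Polynomial.X_sub_C_ne_zero z1
    have hhdeg : h.natDegree = n := by
      have := Polynomial.natDegree_mul hXz hh0
      rw [← hgh, Polynomial.natDegree_X_sub_C, hdeg] at this
      omega
    -- coefficient relations
    have hc0 : g.coeff 0 = -z1 * h.coeff 0 := by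
      rw [hgh, Polynomial.mul_coeff_zero]
      simp
    have hci : ∀ i, g.coeff (i + 1) = h.coeff i - z1 * h.coeff (i + 1) := by
      intro i
      rw [hgh, sub_mul, Polynomial.coeff_sub, Polynomial.coeff_X_mul]
      simp [mul_comm]
    -- show h satisfies the hypothesis
    have hex' : ∃ k, 1 ≤ k ∧ ‖h.coeff 0‖ ≤ ‖h.coeff k‖ * r ^ k := by
      by_contra hcon
      push_neg at hcon
      have hj : ∀ j, 1 ≤ j → ‖h.coeff j‖ * r ^ j < ‖h.coeff 0‖ := hcon
      have hpos : 0 < ‖h.coeff 0‖ :=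
        lt_of_le_of_lt (by positivity) (hj 1 le_rfl)
      obtain ⟨k, hk1, hk⟩ := hex
      obtain ⟨k, rfl⟩ := Nat.exists_eq_add_of_le hk1
      set m := 1 + k with hm
      have hlt : ‖g.coeff m‖ * r ^ m < ‖z1‖ * ‖h.coeff 0‖ := by
        have h1 : ‖h.coeff (m - 1)‖ * r ^ m < ‖z1‖ * ‖h.coeff 0‖ := by
          rcases Nat.eq_or_lt_of_le hk1 with h' | h'
          · -- m = 1
            have : m = 1 := h'.symm
            rw [this]
            simp only [pow_one]
            calc ‖h.coeff 0‖ * r < ‖h.coeff 0‖ * ‖z1‖ := by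
                  exact mul_lt_mul_of_pos_left hz1r hpos
              _ = ‖z1‖ * ‖h.coeff 0‖ := mul_comm _ _
          · have hm2 : 2 ≤ m := h'
            have h2 : ‖h.coeff (m - 1)‖ * r ^ (m - 1) < ‖h.coeff 0‖ := hj (m - 1) (by omega)
            have : ‖h.coeff (m - 1)‖ * r ^ m = (‖h.coeff (m - 1)‖ * r ^ (m - 1)) * r := by
              rw [mul_assoc, ← pow_succ]
              congr 2
              omega
            rw [this]
            calc (‖h.coeff (m - 1)‖ * r ^ (m - 1)) * r < ‖h.coeff 0‖ * r := by
                  apply mul_lt_mul_of_pos_right h2 hr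
              _ < ‖h.coeff 0‖ * ‖z1‖ := mul_lt_mul_of_pos_left hz1r hpos
              _ = ‖z1‖ * ‖h.coeff 0‖ := mul_comm _ _
        have h2 : ‖z1‖ * ‖h.coeff m‖ * r ^ m < ‖z1‖ * ‖h.coeff 0‖ := by
          rw [mul_assoc]
          exact mul_lt_mul_of_pos_left (hj m hk1) (lt_trans hr hz1r)
        have hgm : ‖g.coeff m‖ ≤ max ‖h.coeff (m - 1)‖ (‖z1‖ * ‖h.coeff m‖) := by
          have hmeq : m = (m - 1) + 1 := by omega
          rw [hmeq, hci (m - 1), ← hmeq]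
          refine le_trans ?_ (le_of_eq rfl)
          calc ‖h.coeff (m - 1) - z1 * h.coeff m‖
              ≤ max ‖h.coeff (m - 1)‖ ‖z1 * h.coeff m‖ := by
                rw [sub_eq_add_neg]
                refine le_trans (norm_add_le_max _ _) ?_
                simp
            _ = max ‖h.coeff (m - 1)‖ (‖z1‖ * ‖h.coeff m‖) := by rw [norm_mul]
        have : ‖g.coeff m‖ * r ^ m < ‖z1‖ * ‖h.coeff 0‖ := by
          rcases le_max_iff.mp hgm with h' | h'
          · exact lt_of_le_of_lt (mul_le_mul_of_nonneg_right h' (by positivity)) h1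
          · exact lt_of_le_of_lt (mul_le_mul_of_nonneg_right h' (by positivity)) h2
        exact this
      have heq : ‖g.coeff 0‖ = ‖z1‖ * ‖h.coeff 0‖ := by
        rw [hc0, norm_mul, norm_neg]
      rw [heq] at hk
      exact absurd (lt_of_le_of_lt hk hlt) (lt_irrefl _)
    obtain ⟨z, hzr, hz⟩ := ih h (le_of_eq hhdeg) hex'
    refine ⟨z, hzr, ?_⟩
    rw [hgh, Polynomial.eval_mul, hz, mul_zero]

/-- The image of a closed disk under a non-constant polynomial is a closed disk
centered at the image of the center. -/
theorem polynomial_image_closedBall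
    {K : Type*} [NontriviallyNormedField K] [IsUltrametricDist K]
    [CompleteSpace K] [IsAlgClosed K]
    (f : Polynomial K) (hf : 0 < f.natDegree) (c : K) (r : ℝ) (hr : 0 < r) :
    ∃ s : ℝ, 0 < s ∧
      (fun x => f.eval x) '' Metric.closedBall c r = Metric.closedBall (f.eval c) s := by
  set g : Polynomial K := f.comp (Polynomial.X + Polynomial.C c) with hgdef
  have hgeval : ∀ t : K, g.eval t = f.eval (t + c) := by
    intro t; simp [hgdef]
  have hgdeg : g.natDegree = f.natDegree := by
    rw [hgdef, Polynomial.natDegree_comp]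
    simp
  set n := f.natDegree with hn
  have hg0 : g ≠ 0 := by
    intro h
    rw [h] at hgdeg
    simp at hgdeg
    omega
  have hg00 : g.coeff 0 = f.eval c := by
    have := hgeval 0
    rwa [zero_add, ← Polynomial.coeff_zero_eq_eval_zero] at this
  set S : Finset ℕ := (Finset.range (n + 1)).erase 0 with hS
  have hSne : S.Nonempty := ⟨n, by simp [hS]; omega⟩
  set s : ℝ := S.sup' hSne (fun i => ‖g.coeff i‖ * r ^ i) with hsdef
  have hnS : n ∈ S := by simp [hS]; omega
  have hspos : 0 < s := by
    have h1 : ‖g.coeff n‖ * r ^ n ≤ s := Finset.le_sup' (fun i => ‖g.coeff i‖ * r ^ i) hnS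
    have h2 : g.coeff n ≠ 0 := by
      rw [← hgdeg]
      exact Polynomial.coeff_ne_zero_of_eq_degree (Polynomial.degree_eq_natDegree hg0)
    have : 0 < ‖g.coeff n‖ * r ^ n := mul_pos (norm_pos_iff.mpr h2) (pow_pos hr n)
    linarith
  refine ⟨s, hspos, ?_⟩
  ext y
  constructor
  · rintro ⟨x, hx, rfl⟩
    rw [Metric.mem_closedBall] at hx ⊢
    rw [dist_eq_norm]
    have hxc : ‖x - c‖ ≤ r := by rwa [← dist_eq_norm]
    set t := x - c with ht
    have hxt : f.eval x = g.eval t := by rw [hgeval, ht, sub_add_cancel]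
    show ‖f.eval x - f.eval c‖ ≤ s
    rw [hxt, ← hg00]
    have hev : g.eval t = ∑ i ∈ Finset.range (n + 1), g.coeff i * t ^ i := by
      rw [Polynomial.eval_eq_sum_range]
      rw [hgdeg]
    have hsplit : g.eval t - g.coeff 0 = ∑ i ∈ S, g.coeff i * t ^ i := by
      rw [hev, hS]
      rw [← Finset.add_sum_erase _ _ (by simp : (0 : ℕ) ∈ Finset.range (n + 1))]
      simp
    rw [hsplit]
    apply norm_sum_le_of_forall_le_of_nonneg (le_of_lt hspos)
    intro i hi
    have hi1 : 1 ≤ i := by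
      rw [hS] at hi
      have := Finset.ne_of_mem_erase hi
      omega
    calc ‖g.coeff i * t ^ i‖ = ‖g.coeff i‖ * ‖t‖ ^ i := by rw [norm_mul, norm_pow]
      _ ≤ ‖g.coeff i‖ * r ^ i := by
          apply mul_le_mul_of_nonneg_left (pow_le_pow_left₀ (norm_nonneg _) hxc i) (norm_nonneg _)
      _ ≤ s := Finset.le_sup' (fun i => ‖g.coeff i‖ * r ^ i) hi
  · intro hy
    rw [Metric.mem_closedBall, dist_eq_norm] at hy
    set p : Polynomial K := g - Polynomial.C y with hpdef
    have hp0 : p.coeff 0 = f.eval c - y := by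
      rw [hpdef, Polynomial.coeff_sub, Polynomial.coeff_C_zero, hg00]
    have hpi : ∀ i, 1 ≤ i → p.coeff i = g.coeff i := by
      intro i hi
      rw [hpdef, Polynomial.coeff_sub, Polynomial.coeff_C, if_neg (by omega)]
      ring
    obtain ⟨k, hkS, hks⟩ := Finset.exists_mem_eq_sup' hSne (fun i => ‖g.coeff i‖ * r ^ i)
    have hk1 : 1 ≤ k := by
      rw [hS] at hkS
      have := Finset.ne_of_mem_erase hkS
      omega
    have hple : ‖p.coeff 0‖ ≤ ‖p.coeff k‖ * r ^ k := by
      rw [hp0, hpi k hk1, ← hks, ← hsdef]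
      rwa [← norm_neg, neg_sub]
    obtain ⟨z, hzr, hz⟩ := exists_root_norm_le r hr p.natDegree p le_rfl ⟨k, hk1, hple⟩
    refine ⟨z + c, ?_, ?_⟩
    · rw [Metric.mem_closedBall, dist_eq_norm, add_sub_cancel_right]
      exact hzr
    · show f.eval (z + c) = y
      rw [← hgeval z]
      rw [hpdef, Polynomial.eval_sub, Polynomial.eval_C, sub_eq_zero] at hz
      exact hz
end

section
/- Let f ∈ C_K[z] be a non-constant polynomial, let D̄_r(c) be a closed disk (r > 0), and let s > 0 be such that f(D̄_r(c)) = D̄_s(f(c)). Then for all x, y ∈ D̄_r(c), |f(x) − f(y)| ≤ (s/r)·|x − y|. -/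
/-! Write `f (c + t) = ∑ aᵢ tⁱ`. For `i ≥ 1` we have `‖aᵢ‖ rⁱ ≤ s`: otherwise, since the value
group of an algebraically closed field is dense, there is `w` with `s < ‖w‖ < ‖aᵢ‖ rⁱ`. If all
roots of `f (c + t) - f c - w` had norm `≥ r`, its constant term `-w` would dominate every
`‖aᵢ‖ rⁱ`; so some root has norm `< r`, and `f` attains `f c + w ∉ D̄_s(f c)` on the disk.
The Lipschitz bound then follows termwise from the ultrametric inequality and
`‖uⁱ - vⁱ‖ ≤ ‖u - v‖ rⁱ⁻¹` on the disk. -/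

open Polynomial Metric Set

lemma IsUltrametricDist.norm_pow_succ_sub_pow_succ_le {K : Type*} [NormedField K]
    [IsUltrametricDist K] {r : ℝ} {u v : K} (hu : ‖u‖ ≤ r) (hv : ‖v‖ ≤ r) (n : ℕ) :
    ‖u ^ (n + 1) - v ^ (n + 1)‖ ≤ ‖u - v‖ * r ^ n := by
  have hr : 0 ≤ r := (norm_nonneg u).trans hu
  rw [← geom_sum₂_mul u v (n + 1), norm_mul, mul_comm]
  gcongr
  refine IsUltrametricDist.norm_sum_le_of_forall_le_of_nonneg (by positivity) fun i hi => ?_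
  have hin : i + (n - i) = n := by have := Finset.mem_range.mp hi; omega
  calc ‖u ^ i * v ^ (n + 1 - 1 - i)‖ = ‖u‖ ^ i * ‖v‖ ^ (n - i) := by simp
    _ ≤ r ^ i * r ^ (n - i) := by gcongr
    _ = r ^ n := by rw [← pow_add, hin]

lemma IsAlgClosed.exists_norm_eq_rpow {K : Type*} [NormedField K] [IsAlgClosed K] (x : K) (q : ℚ) :
    ∃ u : K, ‖u‖ = ‖x‖ ^ (q : ℝ) := by
  obtain ⟨u, hu⟩ := IsAlgClosed.exists_pow_nat_eq (x ^ q.num) q.pos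
  have hnorm : ‖u‖ ^ q.den = ‖x‖ ^ q.num := by rw [← norm_pow, hu, norm_zpow]
  refine ⟨u, ?_⟩
  rw [Rat.cast_def, div_eq_mul_inv, Real.rpow_mul (norm_nonneg x), Real.rpow_intCast, ← hnorm,
    Real.pow_rpow_inv_natCast (norm_nonneg u) q.pos.ne']

lemma IsAlgClosed.exists_lt_norm_lt {K : Type*} [NontriviallyNormedField K] [IsAlgClosed K]
    {a b : ℝ} (ha : 0 ≤ a) (hab : a < b) : ∃ w : K, a < ‖w‖ ∧ ‖w‖ < b := by
  obtain ⟨x, hx⟩ := NormedField.exists_one_lt_norm K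
  set a' := max a (b / 2)
  have ha' : 0 < a' := lt_max_of_lt_right (by linarith)
  obtain ⟨q, hq₁, hq₂⟩ := exists_rat_btwn (Real.logb_lt_logb hx ha' (max_lt hab (by linarith)))
  obtain ⟨u, hu⟩ := exists_norm_eq_rpow x q
  refine ⟨u, (le_max_left a (b / 2)).trans_lt ?_, ?_⟩
  · rwa [hu, ← Real.logb_lt_iff_lt_rpow hx ha']
  · rwa [hu, ← Real.lt_logb_iff_rpow_lt hx (by linarith)]

namespace Polynomial

section

variable {K : Type*} [NormedField K] [IsUltrametricDist K]

lemma norm_coeff_X_sub_C_mul_mul_pow_le {r : ℝ} (hr : 0 ≤ r) {ρ : K} (hρ : r ≤ ‖ρ‖) {q : K[X]}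
    (hq : ∀ i, ‖q.coeff i‖ * r ^ i ≤ ‖q.coeff 0‖) (i : ℕ) :
    ‖((X - C ρ) * q).coeff i‖ * r ^ i ≤ ‖((X - C ρ) * q).coeff 0‖ := by
  have h₀ : ‖((X - C ρ) * q).coeff 0‖ = ‖ρ‖ * ‖q.coeff 0‖ := by simp [mul_coeff_zero]
  rcases i with _ | n
  · simp
  have hsucc : ((X - C ρ) * q).coeff (n + 1) = q.coeff n + -ρ * q.coeff (n + 1) := by
    rw [sub_mul, coeff_sub, coeff_X_mul, coeff_C_mul]; ring
  rw [h₀, hsucc]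
  calc ‖q.coeff n + -ρ * q.coeff (n + 1)‖ * r ^ (n + 1)
      ≤ max ‖q.coeff n‖ ‖-ρ * q.coeff (n + 1)‖ * r ^ (n + 1) := by
        gcongr; exact IsUltrametricDist.norm_add_le_max _ _
    _ = max (‖q.coeff n‖ * r ^ n * r) (‖ρ‖ * (‖q.coeff (n + 1)‖ * r ^ (n + 1))) := by
        rw [max_mul_of_nonneg _ _ (by positivity), norm_mul, norm_neg, pow_succ]; ring_nf
    _ ≤ ‖ρ‖ * ‖q.coeff 0‖ := by
        refine max_le ?_ (by gcongr; exact hq _)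
        calc ‖q.coeff n‖ * r ^ n * r ≤ ‖q.coeff 0‖ * ‖ρ‖ := by gcongr; exact hq n
          _ = ‖ρ‖ * ‖q.coeff 0‖ := mul_comm _ _

lemma norm_coeff_multiset_prod_X_sub_C_mul_pow_le {r : ℝ} (hr : 0 ≤ r) {s : Multiset K}
    (hs : ∀ ρ ∈ s, r ≤ ‖ρ‖) (i : ℕ) :
    ‖(s.map fun ρ => X - C ρ).prod.coeff i‖ * r ^ i ≤ ‖(s.map fun ρ => X - C ρ).prod.coeff 0‖ := by
  induction s using Multiset.induction generalizing i with
  | empty => rcases i with _ | n <;> simp [coeff_one]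
  | cons ρ s ih =>
    simp only [Multiset.map_cons, Multiset.prod_cons]
    exact norm_coeff_X_sub_C_mul_mul_pow_le hr (hs ρ (Multiset.mem_cons_self ρ s))
      (ih fun σ hσ => hs σ (Multiset.mem_cons_of_mem hσ)) i

lemma exists_mem_roots_norm_lt [IsAlgClosed K] {p : K[X]} {r : ℝ} (hr : 0 ≤ r) {i : ℕ}
    (hi : ‖p.coeff 0‖ < ‖p.coeff i‖ * r ^ i) : ∃ ρ ∈ p.roots, ‖ρ‖ < r := by
  by_contra! hroots
  have hp := C_leadingCoeff_mul_prod_multiset_X_sub_C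
    (splits_iff_card_roots.mp (IsAlgClosed.splits p))
  have hprod := norm_coeff_multiset_prod_X_sub_C_mul_pow_le hr hroots i
  rw [← hp, coeff_C_mul, coeff_C_mul, norm_mul, norm_mul, mul_assoc] at hi
  exact (lt_of_mul_lt_mul_left hi (norm_nonneg _)).not_ge hprod

end

section

variable {K : Type*} [NontriviallyNormedField K] [IsUltrametricDist K] {f : K[X]} {c : K}
  {r s : ℝ}

lemma norm_taylor_coeff_mul_pow_le [IsAlgClosed K] (hr : 0 ≤ r)
    (hf : MapsTo f.eval (closedBall c r) (closedBall (f.eval c) s)) {i : ℕ} (hi : i ≠ 0) :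
    ‖(taylor c f).coeff i‖ * r ^ i ≤ s := by
  have hs : 0 ≤ s := by simpa using hf (mem_closedBall_self hr)
  by_contra! hlt
  obtain ⟨w, hsw, hw⟩ := IsAlgClosed.exists_lt_norm_lt (K := K) hs hlt
  set p := taylor c f - C (f.eval c + w)
  have hp₀ : p.coeff 0 = -w := by simp [p, taylor_coeff_zero]
  have hpi : p.coeff i = (taylor c f).coeff i := by simp [p, coeff_C, hi]
  obtain ⟨ρ, hρ, hρr⟩ := exists_mem_roots_norm_lt hr (i := i) (by rwa [hp₀, hpi, norm_neg])
  have hfρ : f.eval (ρ + c) = f.eval c + w := by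
    simpa [p, taylor_eval, sub_eq_zero] using (mem_roots'.mp hρ).2
  have hws : ‖w‖ ≤ s := by
    have hρc : ρ + c ∈ closedBall c r := by simpa [dist_eq_norm] using hρr.le
    simpa [hfρ, dist_eq_norm] using hf hρc
  linarith

lemma norm_eval_sub_eval_le_of_norm_taylor_coeff_le (hr : 0 < r)
    (hcoeff : ∀ i ≠ 0, ‖(taylor c f).coeff i‖ * r ^ i ≤ s) {x y : K}
    (hx : x ∈ closedBall c r) (hy : y ∈ closedBall c r) :
    ‖f.eval x - f.eval y‖ ≤ s / r * ‖x - y‖ := by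
  have hs : 0 ≤ s := le_trans (by positivity) (hcoeff 1 one_ne_zero)
  rw [mem_closedBall, dist_eq_norm] at hx hy
  rw [← taylor_eval_sub c f x, ← taylor_eval_sub c f y, eval_eq_sum_range, eval_eq_sum_range,
    ← Finset.sum_sub_distrib]
  refine IsUltrametricDist.norm_sum_le_of_forall_le_of_nonneg (by positivity) fun i _ => ?_
  rcases i with _ | n
  · simp only [pow_zero, sub_self, norm_zero]; positivity
  set a := (taylor c f).coeff (n + 1)
  calc ‖a * (x - c) ^ (n + 1) - a * (y - c) ^ (n + 1)‖
      = ‖a‖ * ‖(x - c) ^ (n + 1) - (y - c) ^ (n + 1)‖ := by rw [← mul_sub, norm_mul]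
    _ ≤ ‖a‖ * (‖x - y‖ * r ^ n) := by
        gcongr; simpa using IsUltrametricDist.norm_pow_succ_sub_pow_succ_le hx hy n
    _ = ‖a‖ * r ^ (n + 1) / r * ‖x - y‖ := by field_simp; ring
    _ ≤ s / r * ‖x - y‖ := by gcongr; exact hcoeff _ n.succ_ne_zero

end

end Polynomial

theorem polynomial_lipschitz_on_closedBall_general
    {K : Type*} [NontriviallyNormedField K] [IsUltrametricDist K]
    [IsAlgClosed K]
    (f : Polynomial K) (c : K) (r s : ℝ) (hr : 0 < r)
    (him : (fun x => f.eval x) '' Metric.closedBall c r = Metric.closedBall (f.eval c) s) :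
    ∀ x ∈ Metric.closedBall c r, ∀ y ∈ Metric.closedBall c r,
      ‖f.eval x - f.eval y‖ ≤ (s / r) * ‖x - y‖ := by
  have hmaps : MapsTo f.eval (closedBall c r) (closedBall (f.eval c) s) :=
    him ▸ mapsTo_image _ _
  intro x hx y hy
  exact Polynomial.norm_eval_sub_eval_le_of_norm_taylor_coeff_le hr
    (fun i hi => Polynomial.norm_taylor_coeff_mul_pow_le hr.le hmaps hi) hx hy

/-- If a non-constant polynomial maps the closed disk of radius `r` about `c` onto
the closed disk of radius `s` about `f(c)`, then `|f(x) - f(y)| ≤ (s/r)·|x - y|`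
for all `x, y` in the disk. -/
theorem polynomial_lipschitz_on_closedBall
    {K : Type*} [NontriviallyNormedField K] [IsUltrametricDist K]
    [CompleteSpace K] [IsAlgClosed K]
    (f : Polynomial K) (hf : 0 < f.natDegree) (c : K) (r s : ℝ) (hr : 0 < r) (hs : 0 < s)
    (him : (fun x => f.eval x) '' Metric.closedBall c r = Metric.closedBall (f.eval c) s) :
    ∀ x ∈ Metric.closedBall c r, ∀ y ∈ Metric.closedBall c r,
      ‖f.eval x - f.eval y‖ ≤ (s / r) * ‖x - y‖ :=
  polynomial_lipschitz_on_closedBall_general f c r s hr him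
end

section
/- (Hsia's criterion) Let F ⊆ C_K[z] be a family of polynomials, let U = D̄_r(c) be a closed disk (r > 0), and suppose there is a point y ∈ C_K such that f(x) ≠ y for all f ∈ F and all x ∈ U. Then the family F is equicontinuous with respect to the spherical metric Δ at every point of U. -/
/-!
Every point of an ultrametric disk is a centre of it, so we may take `x₀` as the centre.
Write `f(x) - y = a ∏ (x - α)` over the roots `α` of `f - y`. Since `f` omits `y` on the disk,
every root lies at distance at least `r` from `x₀`, so for `|x - x₀| ≤ r` each factor satisfies
`|(x - α) - (x₀ - α)| ≤ (|x - x₀| / r) |x₀ - α|`, and the ultrametric inequality propagates this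
relative bound to the whole product: `|f(x) - f(x₀)| ≤ (|x - x₀| / r) |f(x₀) - y|`. Dividing by
the spherical weights gives `Δ(f(x), f(x₀)) ≤ (|x - x₀| / r) max(|y|, 1)`, uniformly in `f`.
-/

/-- The spherical metric `Δ(x,y) = |x - y| / (max(|x|,1) · max(|y|,1))`. -/
noncomputable def sphMetric {K : Type*} [NormedField K] (x y : K) : ℝ :=
  ‖x - y‖ / (max ‖x‖ 1 * max ‖y‖ 1)

open Polynomial Metric

section Ultrametric

variable {K : Type*} [NormedField K] [IsUltrametricDist K]

theorem IsUltrametricDist.norm_multiset_prod_map_sub_prod_map_le {ι : Type*} (s : Multiset ι)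
    (a b : ι → K) {t : ℝ} (ht₀ : 0 ≤ t) (ht₁ : t ≤ 1)
    (hab : ∀ i ∈ s, ‖a i - b i‖ ≤ t * ‖b i‖) :
    ‖(s.map a).prod - (s.map b).prod‖ ≤ t * ‖(s.map b).prod‖ := by
  induction s using Multiset.induction_on with
  | empty => simpa using ht₀
  | cons i s ih =>
    have hi := hab i (Multiset.mem_cons_self i s)
    have hs := ih fun j hj => hab j (Multiset.mem_cons_of_mem hj)
    simp only [Multiset.map_cons, Multiset.prod_cons]
    set P := (s.map a).prod
    set Q := (s.map b).prod
    have hai : ‖a i‖ ≤ ‖b i‖ := by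
      calc ‖a i‖ = ‖(a i - b i) + b i‖ := by rw [sub_add_cancel]
        _ ≤ max (t * ‖b i‖) ‖b i‖ :=
          (IsUltrametricDist.norm_add_le_max _ _).trans (max_le_max_right _ hi)
        _ = ‖b i‖ := max_eq_right (mul_le_of_le_one_left (norm_nonneg _) ht₁)
    calc ‖a i * P - b i * Q‖ = ‖a i * (P - Q) + (a i - b i) * Q‖ := by congr 1; ring
      _ ≤ max (‖a i‖ * ‖P - Q‖) (‖a i - b i‖ * ‖Q‖) := by
        simpa only [norm_mul] using
          IsUltrametricDist.norm_add_le_max (a i * (P - Q)) ((a i - b i) * Q)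
      _ ≤ max (‖b i‖ * (t * ‖Q‖)) (t * ‖b i‖ * ‖Q‖) := by gcongr
      _ = t * ‖b i * Q‖ := by rw [mul_left_comm, ← mul_assoc, max_self, mul_assoc, norm_mul]

theorem Polynomial.Splits.norm_eval_sub_eval_le {g : K[X]} (hg : g.Splits) {x₀ : K} {r : ℝ}
    (hr : 0 < r) (hroots : ∀ z ∈ ball x₀ r, ¬ g.IsRoot z) {x : K} (hx : x ∈ closedBall x₀ r) :
    ‖g.eval x - g.eval x₀‖ ≤ ‖x - x₀‖ / r * ‖g.eval x₀‖ := by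
  rw [mem_closedBall_iff_norm] at hx
  rw [hg.eval_eq_prod_roots, hg.eval_eq_prod_roots, ← mul_sub, norm_mul, norm_mul,
    mul_left_comm]
  gcongr
  refine IsUltrametricDist.norm_multiset_prod_map_sub_prod_map_le _ _ _ (by positivity)
    ((div_le_one hr).2 hx) fun α hα => ?_
  have hαr : r ≤ ‖x₀ - α‖ := by
    rw [← dist_eq_norm, dist_comm]
    exact not_lt.1 fun h => hroots α h (isRoot_of_mem_roots hα)
  calc ‖(x - α) - (x₀ - α)‖ = ‖x - x₀‖ / r * r := by
        rw [sub_sub_sub_cancel_right, div_mul_cancel₀ _ hr.ne']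
    _ ≤ ‖x - x₀‖ / r * ‖x₀ - α‖ := by gcongr

theorem norm_sub_le_max_one_mul_max_one (u v : K) : ‖u - v‖ ≤ max ‖u‖ 1 * max ‖v‖ 1 := by
  rw [sub_eq_add_neg]
  refine (IsUltrametricDist.norm_add_le_max u (-v)).trans <| max_le ?_ ?_
  · exact (le_max_left _ _).trans (le_mul_of_one_le_right (by positivity) (le_max_right _ _))
  · exact norm_neg v ▸ (le_max_left _ _).trans
      (le_mul_of_one_le_left (by positivity) (le_max_right _ _))

end Ultrametric

theorem sphMetric_le_norm_sub_div {K : Type*} [NormedField K] (u v : K) :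
    sphMetric u v ≤ ‖u - v‖ / max ‖v‖ 1 :=
  div_le_div_of_nonneg_left (norm_nonneg _) (by positivity)
    (le_mul_of_one_le_left (by positivity) (le_max_right _ _))

theorem sphMetric_eval_le_of_forall_eval_ne {K : Type*} [NormedField K] [IsUltrametricDist K]
    [IsAlgClosed K] {f : K[X]} {x₀ y : K} {r : ℝ} (hr : 0 < r)
    (hf : ∀ z ∈ ball x₀ r, f.eval z ≠ y) {x : K} (hx : x ∈ closedBall x₀ r) :
    sphMetric (f.eval x) (f.eval x₀) ≤ ‖x - x₀‖ / r * max ‖y‖ 1 := by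
  have hdiff := (IsAlgClosed.splits (f - C y)).norm_eval_sub_eval_le hr
    (fun z hz => by simpa [sub_eq_zero] using hf z hz) hx
  simp only [eval_sub, eval_C, sub_sub_sub_cancel_right] at hdiff
  calc sphMetric (f.eval x) (f.eval x₀) ≤ ‖f.eval x - f.eval x₀‖ / max ‖f.eval x₀‖ 1 :=
        sphMetric_le_norm_sub_div _ _
    _ ≤ ‖x - x₀‖ / r * (max ‖f.eval x₀‖ 1 * max ‖y‖ 1) / max ‖f.eval x₀‖ 1 := by
        gcongr
        exact hdiff.trans (by gcongr; exact norm_sub_le_max_one_mul_max_one _ _)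
    _ = ‖x - x₀‖ / r * max ‖y‖ 1 := by field_simp

theorem hsia_criterion_general
    {K : Type*} [NontriviallyNormedField K] [IsUltrametricDist K]
    [IsAlgClosed K]
    (F : Set (Polynomial K)) (c : K) (r : ℝ) (hr : 0 < r) (y : K)
    (h : ∀ f ∈ F, ∀ x ∈ Metric.closedBall c r, f.eval x ≠ y) :
    ∀ x₀ ∈ Metric.closedBall c r, ∀ e : ℝ, 0 < e → ∃ δ : ℝ, 0 < δ ∧
      ∀ f ∈ F, ∀ x : K, ‖x - x₀‖ < δ → sphMetric (f.eval x) (f.eval x₀) < e := by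
  intro x₀ hx₀ e he
  rw [IsUltrametricDist.closedBall_eq_of_mem hx₀] at h
  have hM : 0 < max ‖y‖ 1 := lt_max_of_lt_right one_pos
  refine ⟨min r (e * r / max ‖y‖ 1), by positivity, fun f hf x hx => ?_⟩
  have hxr : x ∈ closedBall x₀ r := mem_closedBall_iff_norm.2 (hx.le.trans (min_le_left _ _))
  calc sphMetric (f.eval x) (f.eval x₀) ≤ ‖x - x₀‖ / r * max ‖y‖ 1 :=
        sphMetric_eval_le_of_forall_eval_ne hr
          (fun z hz => h f hf z (ball_subset_closedBall hz)) hxr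
    _ < e := by
        rw [div_mul_eq_mul_div, div_lt_iff₀ hr, ← lt_div_iff₀ hM]
        exact hx.trans_le (min_le_right _ _)

/-- Hsia's criterion: a family of polynomials omitting a common value `y` on a
closed disk `U` is equicontinuous (w.r.t. the spherical metric) at every point of `U`. -/
theorem hsia_criterion
    {K : Type*} [NontriviallyNormedField K] [IsUltrametricDist K]
    [CompleteSpace K] [IsAlgClosed K]
    (F : Set (Polynomial K)) (c : K) (r : ℝ) (hr : 0 < r) (y : K)
    (h : ∀ f ∈ F, ∀ x ∈ Metric.closedBall c r, f.eval x ≠ y) :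
    ∀ x₀ ∈ Metric.closedBall c r, ∀ e : ℝ, 0 < e → ∃ δ : ℝ, 0 < δ ∧
      ∀ f ∈ F, ∀ x : K, ‖x - x₀‖ < δ → sphMetric (f.eval x) (f.eval x₀) < e :=
  hsia_criterion_general F c r hr y h
end

section
/- Let a ∈ C_K with |a| > 1, and let y₁, y₂ ∈ C_K with |y₂| ≤ |y₁|. Then |φ_a(y₁) − φ_a(y₂)| ≤ |y₁ − y₂| · |a| · max{ |p|·|y₁|^{p−1}, |y₁|^p, |y₁ − y₂|^{p−1} } (equivalently, when y₁ ≠ 0, |φ_a(y₁) − φ_a(y₂)| ≤ |y₁ − y₂|·|a|·|y₁|^{p−1}·max{ |p|, |y₁|, (|y₁ − y₂|/|y₁|)^{p−1} }). -/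
/-- The polynomial map `φ_a(z) = (1-a) z^(p+1) + a z^p`. -/
def phi {K : Type*} [Field K] (p : ℕ) (a : K) (z : K) : K :=
  (1 - a) * z ^ (p + 1) + a * z ^ p

/-- Distortion estimate: for `|a| > 1` and `|y₂| ≤ |y₁|`,
`|φ_a(y₁) - φ_a(y₂)| ≤ |y₁-y₂|·|a|·max{|p|·|y₁|^(p-1), |y₁|^p, |y₁-y₂|^(p-1)}`. -/
theorem phi_distortion
    {K : Type*} [NontriviallyNormedField K] [IsUltrametricDist K]
    [CompleteSpace K] [IsAlgClosed K]
    (p : ℕ) (hp : p.Prime) (hpK : ‖(p : K)‖ < 1)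
    (a : K) (ha : 1 < ‖a‖) (y₁ y₂ : K) (h : ‖y₂‖ ≤ ‖y₁‖) :
    ‖phi p a y₁ - phi p a y₂‖ ≤
      ‖y₁ - y₂‖ * ‖a‖ *
        max (‖(p : K)‖ * ‖y₁‖ ^ (p - 1)) (max (‖y₁‖ ^ p) (‖y₁ - y₂‖ ^ (p - 1))) := by
  set d : K := y₁ - y₂ with hd
  have hdle : ‖d‖ ≤ ‖y₁‖ := by
    calc ‖d‖ = ‖y₁ + (-y₂)‖ := by rw [hd, sub_eq_add_neg]
    _ ≤ max ‖y₁‖ ‖-y₂‖ := IsUltrametricDist.norm_add_le_max _ _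
    _ ≤ ‖y₁‖ := by rw [norm_neg]; exact max_le le_rfl h
  have hy1 : (0 : ℝ) ≤ ‖y₁‖ := norm_nonneg _
  have hdn : (0 : ℝ) ≤ ‖d‖ := norm_nonneg _
  have hpn : (0 : ℝ) ≤ ‖(p : K)‖ := norm_nonneg _
  have han : (0 : ℝ) ≤ ‖a‖ := le_trans zero_le_one ha.le
  -- bound on `‖y₁ ^ (p+1) - y₂ ^ (p+1)‖`
  have key1 : ‖y₁ ^ (p + 1) - y₂ ^ (p + 1)‖ ≤ ‖y₁‖ ^ p * ‖d‖ := by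
    rw [← geom_sum₂_mul y₁ y₂ (p + 1), ← hd]
    rw [norm_mul]
    refine mul_le_mul_of_nonneg_right ?_ hdn
    refine IsUltrametricDist.norm_sum_le_of_forall_le_of_nonneg (pow_nonneg hy1 _) ?_
    intro i hi
    rw [Finset.mem_range] at hi
    have hip : i ≤ p := Nat.lt_succ_iff.mp hi
    calc ‖y₁ ^ i * y₂ ^ (p + 1 - 1 - i)‖ = ‖y₁‖ ^ i * ‖y₂‖ ^ (p - i) := by
          rw [norm_mul, norm_pow, norm_pow]; norm_num
    _ ≤ ‖y₁‖ ^ i * ‖y₁‖ ^ (p - i) :=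
        mul_le_mul_of_nonneg_left (pow_le_pow_left₀ (norm_nonneg _) h _) (pow_nonneg hy1 _)
    _ = ‖y₁‖ ^ p := by rw [← pow_add, Nat.add_sub_cancel' hip]
  -- bound on `‖y₁ ^ p - y₂ ^ p‖`
  have key2 : ‖y₁ ^ p - y₂ ^ p‖ ≤
      ‖d‖ * max (‖(p : K)‖ * ‖y₁‖ ^ (p - 1)) (‖d‖ ^ (p - 1)) := by
    have hy2 : y₂ = y₁ + (-d) := by rw [hd]; ring
    have expand : y₂ ^ p =
        ∑ k ∈ Finset.range (p + 1), y₁ ^ k * (-d) ^ (p - k) * (p.choose k : K) := by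
      rw [hy2, add_pow]
    have heq : y₁ ^ p - y₂ ^ p =
        -∑ k ∈ Finset.range p, y₁ ^ k * (-d) ^ (p - k) * (p.choose k : K) := by
      rw [expand, Finset.sum_range_succ]
      simp
    rw [heq, norm_neg]
    have hCnn : (0 : ℝ) ≤ ‖d‖ * max (‖(p : K)‖ * ‖y₁‖ ^ (p - 1)) (‖d‖ ^ (p - 1)) := by
      positivity
    refine IsUltrametricDist.norm_sum_le_of_forall_le_of_nonneg hCnn ?_
    intro k hk
    rw [Finset.mem_range] at hk
    have hterm : ‖y₁ ^ k * (-d) ^ (p - k) * (p.choose k : K)‖ =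
        ‖y₁‖ ^ k * ‖d‖ ^ (p - k) * ‖(p.choose k : K)‖ := by
      rw [norm_mul, norm_mul, norm_pow, norm_pow, norm_neg]
    rw [hterm]
    rcases Nat.eq_zero_or_pos k with hk0 | hk1
    · subst hk0
      have : ‖y₁‖ ^ 0 * ‖d‖ ^ (p - 0) * ‖((p.choose 0 : ℕ) : K)‖ = ‖d‖ * ‖d‖ ^ (p - 1) := by
        simp only [pow_zero, one_mul, Nat.sub_zero, Nat.choose_zero_right, Nat.cast_one, norm_one,
          mul_one]
        conv_lhs => rw [show p = (p - 1) + 1 from (Nat.succ_pred_eq_of_pos hp.pos).symm]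
        rw [pow_succ]
        ring
      rw [this]
      exact mul_le_mul_of_nonneg_left (le_max_right _ _) hdn
    · -- 1 ≤ k < p : the binomial coefficient is divisible by p
      have hdvd : (p : ℕ) ∣ p.choose k := Nat.Prime.dvd_choose_self hp (by omega) hk
      have hchoose : ‖(p.choose k : K)‖ ≤ ‖(p : K)‖ := by
        obtain ⟨m, hm⟩ := hdvd
        rw [hm, Nat.cast_mul, norm_mul]
        calc ‖(p : K)‖ * ‖(m : K)‖ ≤ ‖(p : K)‖ * 1 :=
              mul_le_mul_of_nonneg_left (IsUltrametricDist.norm_natCast_le_one K m) hpn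
        _ = ‖(p : K)‖ := mul_one _
      have hsplit : p - k = (p - k - 1) + 1 := by omega
      have hpow : ‖y₁‖ ^ k * ‖d‖ ^ (p - k) ≤ ‖y₁‖ ^ (p - 1) * ‖d‖ := by
        rw [hsplit, pow_succ, ← mul_assoc]
        refine mul_le_mul_of_nonneg_right ?_ hdn
        calc ‖y₁‖ ^ k * ‖d‖ ^ (p - k - 1) ≤ ‖y₁‖ ^ k * ‖y₁‖ ^ (p - k - 1) :=
              mul_le_mul_of_nonneg_left (pow_le_pow_left₀ hdn hdle _) (pow_nonneg hy1 _)
        _ = ‖y₁‖ ^ (p - 1) := by rw [← pow_add]; congr 1; omega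
      calc ‖y₁‖ ^ k * ‖d‖ ^ (p - k) * ‖(p.choose k : K)‖
          ≤ (‖y₁‖ ^ (p - 1) * ‖d‖) * ‖(p : K)‖ := by
            refine mul_le_mul hpow hchoose (norm_nonneg _) (by positivity)
      _ = ‖d‖ * (‖(p : K)‖ * ‖y₁‖ ^ (p - 1)) := by ring
      _ ≤ ‖d‖ * max (‖(p : K)‖ * ‖y₁‖ ^ (p - 1)) (‖d‖ ^ (p - 1)) :=
          mul_le_mul_of_nonneg_left (le_max_left _ _) hdn
  -- assemble
  have hsplit : phi p a y₁ - phi p a y₂ =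
      (1 - a) * (y₁ ^ (p + 1) - y₂ ^ (p + 1)) + a * (y₁ ^ p - y₂ ^ p) := by
    simp only [phi]; ring
  have h1a : ‖1 - a‖ ≤ ‖a‖ := by
    calc ‖1 - a‖ = ‖1 + (-a)‖ := by rw [sub_eq_add_neg]
    _ ≤ max ‖(1 : K)‖ ‖-a‖ := IsUltrametricDist.norm_add_le_max _ _
    _ ≤ ‖a‖ := by rw [norm_one, norm_neg]; exact max_le ha.le le_rfl
  rw [hsplit]
  refine (IsUltrametricDist.norm_add_le_max _ _).trans (max_le ?_ ?_)
  · calc ‖(1 - a) * (y₁ ^ (p + 1) - y₂ ^ (p + 1))‖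
        = ‖1 - a‖ * ‖y₁ ^ (p + 1) - y₂ ^ (p + 1)‖ := norm_mul _ _
    _ ≤ ‖a‖ * (‖y₁‖ ^ p * ‖d‖) :=
        mul_le_mul h1a key1 (norm_nonneg _) han
    _ = ‖d‖ * ‖a‖ * ‖y₁‖ ^ p := by ring
    _ ≤ ‖d‖ * ‖a‖ *
          max (‖(p : K)‖ * ‖y₁‖ ^ (p - 1)) (max (‖y₁‖ ^ p) (‖d‖ ^ (p - 1))) := by
        refine mul_le_mul_of_nonneg_left ?_ (by positivity)
        exact le_max_of_le_right (le_max_left _ _)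
  · calc ‖a * (y₁ ^ p - y₂ ^ p)‖ = ‖a‖ * ‖y₁ ^ p - y₂ ^ p‖ := norm_mul _ _
    _ ≤ ‖a‖ * (‖d‖ * max (‖(p : K)‖ * ‖y₁‖ ^ (p - 1)) (‖d‖ ^ (p - 1))) :=
        mul_le_mul_of_nonneg_left key2 han
    _ = ‖d‖ * ‖a‖ * max (‖(p : K)‖ * ‖y₁‖ ^ (p - 1)) (‖d‖ ^ (p - 1)) := by ring
    _ ≤ ‖d‖ * ‖a‖ *
          max (‖(p : K)‖ * ‖y₁‖ ^ (p - 1)) (max (‖y₁‖ ^ p) (‖d‖ ^ (p - 1))) := by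
        refine mul_le_mul_of_nonneg_left ?_ (by positivity)
        exact max_le_max le_rfl (le_max_right _ _)
end

section
/- Let a ∈ C_K with |a| > 1, and let y₁, y₂ ∈ C_K with |y₁ − 1| < 1 and |y₂ − 1| < 1. Then |φ_a(y₁) − φ_a(y₂)| = |a| · |y₁ − y₂|. -/
open Finset in
/-- For `|a| > 1` and `y₁, y₂` in the open unit disk about `1`,
`|φ_a(y₁) - φ_a(y₂)| = |a|·|y₁ - y₂|`. -/
theorem phi_expansion_near_one
    {K : Type*} [NontriviallyNormedField K] [IsUltrametricDist K]
    [CompleteSpace K] [IsAlgClosed K]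
    (p : ℕ) (hp : p.Prime) (hpK : ‖(p : K)‖ < 1)
    (a : K) (ha : 1 < ‖a‖) (y₁ y₂ : K) (h₁ : ‖y₁ - 1‖ < 1) (h₂ : ‖y₂ - 1‖ < 1) :
    ‖phi p a y₁ - phi p a y₂‖ = ‖a‖ * ‖y₁ - y₂‖ := by
  -- basic norm facts
  have hle : ∀ y : K, ‖y - 1‖ < 1 → ‖y‖ ≤ 1 := by
    intro y hy
    calc ‖y‖ = ‖(y - 1) + 1‖ := by ring_nf
    _ ≤ max ‖y - 1‖ ‖(1 : K)‖ := IsUltrametricDist.norm_add_le_max _ _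
    _ ≤ 1 := by simp [le_of_lt hy]
  have hmul : ∀ x y : K, ‖x - 1‖ < 1 → ‖y - 1‖ < 1 → ‖x * y - 1‖ < 1 := by
    intro x y hx hy
    have : x * y - 1 = x * (y - 1) + (x - 1) := by ring
    rw [this]
    refine lt_of_le_of_lt (IsUltrametricDist.norm_add_le_max _ _) ?_
    rw [max_lt_iff]
    constructor
    · rw [norm_mul]
      calc ‖x‖ * ‖y - 1‖ ≤ 1 * ‖y - 1‖ := by
            exact mul_le_mul_of_nonneg_right (hle x hx) (norm_nonneg _)
      _ < 1 := by simpa using hy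
    · exact hx
  have hpow : ∀ (y : K), ‖y - 1‖ < 1 → ∀ n : ℕ, ‖y ^ n - 1‖ < 1 := by
    intro y hy n
    induction n with
    | zero => simpa using one_pos
    | succ n ih => rw [pow_succ]; exact hmul _ _ ih hy
  -- terms of the geometric sums
  have hterm : ∀ i j : ℕ, ‖y₁ ^ i * y₂ ^ j - 1‖ < 1 :=
    fun i j => hmul _ _ (hpow y₁ h₁ i) (hpow y₂ h₂ j)
  set S : ℕ → K := fun n => ∑ i ∈ range n, y₁ ^ i * y₂ ^ (n - 1 - i) with hS
  have hgeom : ∀ n : ℕ, y₁ ^ n - y₂ ^ n = S n * (y₁ - y₂) := by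
    intro n; rw [hS]; exact (geom_sum₂_mul y₁ y₂ n).symm
  -- factorization
  have key : phi p a y₁ - phi p a y₂ = ((1 - a) * S (p + 1) + a * S p) * (y₁ - y₂) := by
    have h1 := hgeom (p + 1)
    have h2 := hgeom p
    simp only [phi]
    ring_nf
    ring_nf at h1 h2
    linear_combination (1 - a) * h1 + a * h2
  -- norms of the sums
  have hSle : ∀ n : ℕ, ‖S n‖ ≤ 1 := by
    intro n
    refine IsUltrametricDist.norm_sum_le_of_forall_le_of_nonneg zero_le_one ?_
    intro i _
    rw [norm_mul, norm_pow, norm_pow]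
    exact mul_le_one₀ (pow_le_one₀ (norm_nonneg _) (hle _ h₁))
      (pow_nonneg (norm_nonneg _) _) (pow_le_one₀ (norm_nonneg _) (hle _ h₂))
  have hadd : ∀ x y : K, ‖x‖ < 1 → ‖y‖ < 1 → ‖x + y‖ < 1 := fun x y hx hy =>
    lt_of_le_of_lt (IsUltrametricDist.norm_add_le_max x y) (max_lt hx hy)
  have hsub : ∀ x y : K, ‖x‖ < 1 → ‖y‖ < 1 → ‖x - y‖ < 1 := by
    intro x y hx hy
    rw [sub_eq_add_neg]
    exact hadd x (-y) hx (by rwa [norm_neg])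
  have hsum : ∀ (n : ℕ) (f : ℕ → K), (∀ i ∈ range n, ‖f i‖ < 1) →
      ‖∑ i ∈ range n, f i‖ < 1 := by
    intro n f hf
    induction n with
    | zero => simpa using one_pos
    | succ n ih =>
      rw [Finset.sum_range_succ]
      exact hadd _ _ (ih fun i hi => hf i (mem_range.mpr ((mem_range.mp hi).trans (Nat.lt_succ_self n))))
        (hf n (mem_range.mpr (Nat.lt_succ_self n)))
  have hdiff : ‖S p - S (p + 1) + 1‖ < 1 := by
    have e : S p - S (p + 1) + 1 =
        (∑ i ∈ range p, (y₁ ^ i * y₂ ^ (p - 1 - i) - 1)) -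
        (∑ i ∈ range p, (y₁ ^ i * y₂ ^ (p - i) - 1)) - (y₁ ^ p * y₂ ^ 0 - 1) := by
      rw [hS]
      simp only [Finset.sum_sub_distrib, Finset.sum_const, card_range, nsmul_eq_mul, mul_one]
      rw [Finset.sum_range_succ]
      have h3 : ∀ i ∈ range p, y₁ ^ i * y₂ ^ (p + 1 - 1 - i) = y₁ ^ i * y₂ ^ (p - i) := by
        intro i hi; congr 2; all_goals omega
      rw [Finset.sum_congr rfl h3]
      simp only [Nat.add_sub_cancel, Nat.sub_self, pow_zero]
      ring
    rw [e]
    exact hsub _ _ (hsub _ _ (hsum p _ fun i _ => hterm _ _)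
      (hsum p _ fun i _ => hterm _ _)) (hterm _ _)
  have hSnorm : ‖S p - S (p + 1)‖ = 1 := by
    have : S p - S (p + 1) = (S p - S (p + 1) + 1) + (-1) := by ring
    rw [this, IsUltrametricDist.norm_add_eq_max_of_norm_ne_norm]
    · simp [le_of_lt hdiff, max_eq_right]
    · rw [norm_neg, norm_one]; exact ne_of_lt hdiff
  -- combine
  have hT : ‖(1 - a) * S (p + 1) + a * S p‖ = ‖a‖ := by
    have e : (1 - a) * S (p + 1) + a * S p = S (p + 1) + a * (S p - S (p + 1)) := by ring
    rw [e, IsUltrametricDist.norm_add_eq_max_of_norm_ne_norm]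
    · rw [norm_mul, hSnorm, mul_one]
      exact max_eq_right (le_trans (hSle _) (le_of_lt ha))
    · rw [norm_mul, hSnorm, mul_one]
      exact ne_of_lt (lt_of_le_of_lt (hSle _) ha)
  rw [key, norm_mul, hT]
end

section
/- Let a ∈ C_K with |a| > 1 and set R = |a|^{−1/(p−1)}. Then φ_a maps the closed disk D̄_R(0) onto itself: φ_a(D̄_R(0)) = D̄_R(0). -/
open Polynomial

theorem Polynomial.Splits.exists_mem_roots_norm_lt_one {K : Type*} [NormedField K] {f : K[X]}
    (hf : f.Splits) (h : ‖f.coeff 0‖ < ‖f.leadingCoeff‖) : ∃ r ∈ f.roots, ‖r‖ < 1 := by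
  by_contra! hroots
  have hprod : 1 ≤ ‖f.roots.prod‖ := by
    rw [show ‖f.roots.prod‖ = (f.roots.map norm).prod from map_multiset_prod (normHom : K →*₀ ℝ) _]
    exact Multiset.one_le_prod_map hroots
  refine h.not_ge ?_
  rw [hf.coeff_zero_eq_leadingCoeff_mul_prod_roots, norm_mul, norm_mul, norm_pow, norm_neg,
    norm_one, one_pow, one_mul]
  exact le_mul_of_one_le_right (norm_nonneg _) hprod

theorem exists_norm_lt_one_phi_eq {K : Type*} [NormedField K] [IsAlgClosed K] {p : ℕ}
    (hp : p ≠ 0) {a w : K} (hw : ‖w‖ < ‖1 - a‖) : ∃ z, ‖z‖ < 1 ∧ phi p a z = w := by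
  set f : K[X] := C (1 - a) * X ^ (p + 1) + C a * X ^ p - C w
  have hdeg : f.natDegree = p + 1 := by
    have : 1 - a ≠ 0 := norm_pos_iff.mp ((norm_nonneg w).trans_lt hw)
    unfold f; compute_degree!
  have hlead : f.leadingCoeff = 1 - a := by
    rw [leadingCoeff, hdeg]; unfold f
    simp only [coeff_sub, coeff_add, coeff_C_mul, coeff_X_pow, coeff_C]; simp
  have hcoeff : f.coeff 0 = -w := by unfold f; simp [hp.symm]
  obtain ⟨z, hz, hz1⟩ := (IsAlgClosed.splits f).exists_mem_roots_norm_lt_one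
    (by rwa [hcoeff, hlead, norm_neg])
  refine ⟨z, hz1, ?_⟩
  have hf0 : f ≠ 0 := fun h => by simp [h] at hdeg
  simpa [f, phi, sub_eq_zero] using (mem_roots hf0).mp hz

section Ultrametric

variable {K : Type*} [NormedField K] [IsUltrametricDist K]

theorem norm_one_sub_eq_norm_of_one_lt_norm {a : K} (ha : 1 < ‖a‖) : ‖1 - a‖ = ‖a‖ := by
  rw [sub_eq_add_neg, IsUltrametricDist.norm_add_eq_max_of_norm_ne_norm (by simpa using ha.ne),
    norm_one, norm_neg, max_eq_right ha.le]

theorem norm_phi_of_norm_lt_one (p : ℕ) {a z : K} (ha : 1 < ‖a‖) (hz : ‖z‖ < 1) :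
    ‖phi p a z‖ = ‖a‖ * ‖z‖ ^ p := by
  have hsmall : ‖(1 - a) * z‖ < ‖a‖ := by
    rw [norm_mul, norm_one_sub_eq_norm_of_one_lt_norm ha]
    exact mul_lt_of_lt_one_right (by linarith) hz
  have hfactor : phi p a z = z ^ p * ((1 - a) * z + a) := by unfold phi; ring
  rw [hfactor, norm_mul, norm_pow, IsUltrametricDist.norm_add_eq_max_of_norm_ne_norm hsmall.ne,
    max_eq_right hsmall.le, mul_comm]

end Ultrametric

theorem mul_pow_eq_self_of_eq_rpow {x R : ℝ} {p : ℕ} (hx : 0 < x) (hp : (p : ℝ) ≠ 1)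
    (hR : R = x ^ (-1 / ((p : ℝ) - 1))) : x * R ^ p = R := by
  have hp1 : (p : ℝ) - 1 ≠ 0 := sub_ne_zero.mpr hp
  have hexp : 1 + -1 / ((p : ℝ) - 1) * p = -1 / ((p : ℝ) - 1) := by field_simp; ring
  have hexp0 : 1 + -1 / ((p : ℝ) - 1) * p ≠ 0 := by
    rw [hexp]; exact div_ne_zero (by norm_num) hp1
  rw [hR, ← Real.rpow_natCast, ← Real.rpow_mul hx.le, ← Real.rpow_one_add' hx.le hexp0, hexp]

theorem phi_maps_ball_onto_self_general
    {K : Type*} [NontriviallyNormedField K] [IsUltrametricDist K]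
    [IsAlgClosed K]
    (p : ℕ) (hp : p.Prime)
    (a : K) (ha : 1 < ‖a‖) (R : ℝ) (hR : R = ‖a‖ ^ (-(1 : ℝ) / ((p : ℝ) - 1))) :
    phi p a '' Metric.closedBall (0 : K) R = Metric.closedBall (0 : K) R := by
  have ha0 : 0 < ‖a‖ := one_pos.trans ha
  have hp1 : (1 : ℝ) < p := by exact_mod_cast hp.one_lt
  have hR0 : 0 < R := hR ▸ Real.rpow_pos_of_pos ha0 _
  have hR1 : R < 1 := hR ▸ Real.rpow_lt_one_of_one_lt_of_neg ha
    (div_neg_of_neg_of_pos (by norm_num) (by linarith))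
  have hRfix : ‖a‖ * R ^ p = R := mul_pow_eq_self_of_eq_rpow ha0 hp1.ne' hR
  ext w
  simp only [Set.mem_image, Metric.mem_closedBall, dist_zero_right]
  constructor
  · rintro ⟨z, hz, rfl⟩
    rw [norm_phi_of_norm_lt_one p ha (hz.trans_lt hR1), ← hRfix]
    gcongr
  · intro hw
    obtain ⟨z, hz1, rfl⟩ := exists_norm_lt_one_phi_eq hp.ne_zero
      (hw.trans_lt (by rw [norm_one_sub_eq_norm_of_one_lt_norm ha]; exact hR1.trans ha))
    refine ⟨z, ?_, rfl⟩
    rw [norm_phi_of_norm_lt_one p ha hz1, ← hRfix] at hw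
    exact (pow_le_pow_iff_left₀ (norm_nonneg z) hR0.le hp.ne_zero).mp (le_of_mul_le_mul_left hw ha0)

/-- For `|a| > 1` and `R = |a|^{-1/(p-1)}`, `φ_a` maps the closed disk
`D̄_R(0)` onto itself. -/
theorem phi_maps_ball_onto_self
    {K : Type*} [NontriviallyNormedField K] [IsUltrametricDist K]
    [CompleteSpace K] [IsAlgClosed K]
    (p : ℕ) (hp : p.Prime) (hpK : ‖(p : K)‖ < 1)
    (a : K) (ha : 1 < ‖a‖) (R : ℝ) (hR : R = ‖a‖ ^ (-(1 : ℝ) / ((p : ℝ) - 1))) :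
    phi p a '' Metric.closedBall (0 : K) R = Metric.closedBall (0 : K) R :=
  phi_maps_ball_onto_self_general p hp a ha R hR
end

section
/- Let a ∈ C_K with |a| > 1, let M ≥ 1 be an integer, and let x ∈ C_K with |x − 1| ≤ |a|^{−M}. Then for every integer 0 ≤ i ≤ M: |φ_a^i(x) − 1| = |a|^i · |x − 1|, and for every real r with 0 < r ≤ |a|^{−M}, φ_a^i(D̄_r(x)) = D̄_{|a|^i r}(φ_a^i(x)). -/
/-!
Writing `φ_a(z) = z^(p+1) - a z^p (z - 1)`, one gets for `u, v` in the open unit disk about `1`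
`φ_a(u) - φ_a(v) = a (u - v) w + (u^(p+1) - v^(p+1))` with `|w| = 1`, while the last term has
norm at most `|u - v|`; so `φ_a` multiplies distances there exactly by `|a| > 1`.
It maps a disk of radius `r ≤ 1/|a|` around such a point onto the disk of radius `|a| r`:
for `|c - 1| < |a|` the roots `ρ` of `φ_a - c` satisfy `∏ |1 - ρ| = |1 - c| / |1 - a| < 1`,
so one of them lies in the open unit disk about `1`.
As long as `|a|^i |x - 1| ≤ 1` the orbit of `x` stays in that disk, and the claims follow by
induction on `i`.
-/

open Polynomial Metric

namespace IsUltrametricDist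

lemma norm_add_eq_left_of_norm_lt {S : Type*} [SeminormedAddGroup S] [IsUltrametricDist S]
    {x y : S} (h : ‖y‖ < ‖x‖) : ‖x + y‖ = ‖x‖ := by
  rw [norm_add_eq_max_of_norm_ne_norm h.ne', max_eq_left h.le]

variable {R : Type*} [NormedCommRing R] [NormOneClass R] [IsUltrametricDist R]

lemma norm_eq_one_of_norm_sub_one_lt {u : R} (hu : ‖u - 1‖ < 1) : ‖u‖ = 1 := by
  rw [← add_sub_cancel 1 u, norm_add_eq_left_of_norm_lt (by rwa [norm_one]), norm_one]

lemma norm_pow_sub_pow_le {u v : R} (hu : ‖u‖ ≤ 1) (hv : ‖v‖ ≤ 1) (n : ℕ) :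
    ‖u ^ n - v ^ n‖ ≤ ‖u - v‖ := by
  induction n with
  | zero => simp
  | succ n ih =>
    have hsplit : u ^ (n + 1) - v ^ (n + 1) = u * (u ^ n - v ^ n) + (u - v) * v ^ n := by ring
    rw [hsplit]
    refine (norm_add_le_max _ _).trans (max_le ?_ ?_)
    · exact (norm_mul_le _ _).trans
        ((mul_le_mul hu ih (norm_nonneg _) zero_le_one).trans_eq (one_mul _))
    · have hvn : ‖v ^ n‖ ≤ 1 := (_root_.norm_pow_le _ n).trans (pow_le_one₀ (norm_nonneg _) hv)
      exact (norm_mul_le _ _).trans (mul_le_of_le_one_right (norm_nonneg _) hvn)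

end IsUltrametricDist

lemma Polynomial.exists_mem_roots_norm_sub_lt_one {K : Type*} [NormedField K] [IsAlgClosed K]
    (q : K[X]) (z : K) (h : ‖q.eval z‖ < ‖q.leadingCoeff‖) :
    ∃ ρ ∈ q.roots, ‖z - ρ‖ < 1 := by
  by_contra! hfar
  have hprod : 1 ≤ (q.roots.map fun ρ ↦ ‖z - ρ‖).prod := Multiset.one_le_prod_map hfar
  rw [(IsAlgClosed.splits q).eval_eq_prod_roots, norm_mul] at h
  have hnorm : ‖(q.roots.map (z - ·)).prod‖ = (q.roots.map fun ρ ↦ ‖z - ρ‖).prod := by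
    rw [← normHom_apply, map_multiset_prod, Multiset.map_map]; rfl
  rw [hnorm] at h
  exact h.not_ge (le_mul_of_one_le_right (norm_nonneg _) hprod)

lemma lt_one_of_mul_le_one {A t : ℝ} (hA : 1 < A) (h : A * t ≤ 1) : t < 1 := by
  by_contra! ht
  nlinarith

lemma mul_le_one_of_pow_succ_mul_le_one {A t : ℝ} (hA : 1 ≤ A) (n : ℕ)
    (h : A ^ (n + 1) * t ≤ 1) : A * t ≤ 1 := by
  rcases le_or_gt t 0 with ht | ht
  · nlinarith
  · exact le_trans (mul_le_mul_of_nonneg_right (le_self_pow₀ hA n.succ_ne_zero) ht.le) h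

section Field

variable {K : Type*} [Field K] (p : ℕ) {a : K}

lemma phi_one : phi p a 1 = 1 := by simp [phi]

lemma phi_sub_phi (u v : K) : phi p a u - phi p a v =
    a * (u ^ p * (v - u) + (u ^ p - v ^ p) * (1 - v)) + (u ^ (p + 1) - v ^ (p + 1)) := by
  simp only [phi]; ring

end Field

section Ultrametric

variable {K : Type*} [NormedField K] [IsUltrametricDist K] (p : ℕ) {a : K}

lemma norm_phi_sub_phi (ha : 1 < ‖a‖) {u v : K} (hu : ‖u - 1‖ < 1) (hv : ‖v - 1‖ < 1) :
    ‖phi p a u - phi p a v‖ = ‖a‖ * ‖u - v‖ := by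
  rcases eq_or_ne u v with rfl | huv
  · simp
  have hpos : 0 < ‖u - v‖ := norm_pos_iff.mpr (sub_ne_zero.mpr huv)
  have hu1 := IsUltrametricDist.norm_eq_one_of_norm_sub_one_lt hu
  have hv1 := IsUltrametricDist.norm_eq_one_of_norm_sub_one_lt hv
  have hsmall : ‖(u ^ p - v ^ p) * (1 - v)‖ < ‖u ^ p * (v - u)‖ := by
    rw [norm_mul, norm_mul, norm_pow, hu1, one_pow, one_mul, norm_sub_rev v, norm_sub_rev 1]
    calc ‖u ^ p - v ^ p‖ * ‖v - 1‖ ≤ ‖u - v‖ * ‖v - 1‖ := by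
          gcongr
          exact IsUltrametricDist.norm_pow_sub_pow_le hu1.le hv1.le p
      _ < ‖u - v‖ := mul_lt_of_lt_one_right hpos hv
  have hcoef : ‖u ^ p * (v - u) + (u ^ p - v ^ p) * (1 - v)‖ = ‖u - v‖ := by
    rw [IsUltrametricDist.norm_add_eq_left_of_norm_lt hsmall, norm_mul, norm_pow, hu1, one_pow,
      one_mul, norm_sub_rev]
  have hmain : ‖a * (u ^ p * (v - u) + (u ^ p - v ^ p) * (1 - v))‖ = ‖a‖ * ‖u - v‖ := by
    rw [norm_mul, hcoef]
  rw [phi_sub_phi, IsUltrametricDist.norm_add_eq_left_of_norm_lt, hmain]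
  rw [hmain]
  calc ‖u ^ (p + 1) - v ^ (p + 1)‖ ≤ ‖u - v‖ :=
        IsUltrametricDist.norm_pow_sub_pow_le hu1.le hv1.le _
    _ < ‖a‖ * ‖u - v‖ := lt_mul_left hpos ha

lemma norm_phi_sub_one (ha : 1 < ‖a‖) {u : K} (hu : ‖u - 1‖ < 1) :
    ‖phi p a u - 1‖ = ‖a‖ * ‖u - 1‖ := by
  simpa only [phi_one] using norm_phi_sub_phi (v := 1) p ha hu (by simp)

lemma exists_phi_eq [IsAlgClosed K] (ha : 1 < ‖a‖) {c : K} (hc : ‖c - 1‖ < ‖a‖) :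
    ∃ y, ‖y - 1‖ < 1 ∧ phi p a y = c := by
  have hna : ‖1 - a‖ = ‖a‖ := by
    rw [← norm_neg, neg_sub, sub_eq_add_neg,
      IsUltrametricDist.norm_add_eq_left_of_norm_lt (by simpa)]
  have ha1 : 1 - a ≠ 0 := norm_ne_zero_iff.mp (hna ▸ (zero_lt_one.trans ha).ne')
  set q : K[X] := C (1 - a) * X ^ (p + 1) + C a * X ^ p - C c
  have heval : ∀ y, q.eval y = phi p a y - c := fun y ↦ by simp [q, phi]
  have hdeg : q.natDegree = p + 1 := by
    unfold q
    compute_degree!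
  have hlead : ‖q.leadingCoeff‖ = ‖a‖ := by
    rw [leadingCoeff, hdeg]
    simp only [q, coeff_sub, coeff_add, coeff_C_mul, coeff_X_pow, coeff_C, if_true,
      p.lt_succ_self.ne', p.succ_ne_zero, if_false, mul_one, mul_zero, add_zero, sub_zero]
    exact hna
  obtain ⟨ρ, hρ, hρ1⟩ := q.exists_mem_roots_norm_sub_lt_one 1 (by
    rw [heval, phi_one, hlead, norm_sub_rev]
    exact hc)
  refine ⟨ρ, by rwa [norm_sub_rev], ?_⟩
  rw [← sub_eq_zero, ← heval]
  exact (mem_roots'.mp hρ).2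

lemma image_phi_closedBall [IsAlgClosed K] (ha : 1 < ‖a‖) {x : K} {r : ℝ}
    (hx : ‖a‖ * ‖x - 1‖ ≤ 1) (hr : ‖a‖ * r ≤ 1) :
    phi p a '' closedBall x r = closedBall (phi p a x) (‖a‖ * r) := by
  have hx1 := lt_one_of_mul_le_one ha hx
  have hr1 := lt_one_of_mul_le_one ha hr
  ext c
  simp only [Set.mem_image, mem_closedBall, dist_eq_norm]
  constructor
  · rintro ⟨y, hy, rfl⟩
    have hy1 : ‖y - 1‖ < 1 := by
      rw [← sub_add_sub_cancel y x 1]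
      exact (IsUltrametricDist.norm_add_le_max _ _).trans_lt (max_lt (hy.trans_lt hr1) hx1)
    rw [norm_phi_sub_phi p ha hy1 hx1]
    exact mul_le_mul_of_nonneg_left hy (norm_nonneg a)
  · intro hc
    have hc1 : ‖c - 1‖ < ‖a‖ := by
      rw [← sub_add_sub_cancel c (phi p a x) 1]
      refine ((IsUltrametricDist.norm_add_le_max _ _).trans (max_le (hc.trans hr) ?_)).trans_lt ha
      rwa [norm_phi_sub_one p ha hx1]
    obtain ⟨y, hy1, rfl⟩ := exists_phi_eq p ha hc1
    refine ⟨y, ?_, rfl⟩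
    rw [norm_phi_sub_phi p ha hy1 hx1] at hc
    exact le_of_mul_le_mul_left hc (zero_lt_one.trans ha)

lemma norm_iterate_phi_sub_one (ha : 1 < ‖a‖) (n : ℕ) {x : K}
    (hx : ‖a‖ ^ n * ‖x - 1‖ ≤ 1) : ‖(phi p a)^[n] x - 1‖ = ‖a‖ ^ n * ‖x - 1‖ := by
  induction n generalizing x with
  | zero => simp
  | succ n ih =>
    have hx1 := lt_one_of_mul_le_one ha (mul_le_one_of_pow_succ_mul_le_one ha.le n hx)
    have hφx : ‖a‖ ^ n * ‖phi p a x - 1‖ ≤ 1 := by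
      rwa [norm_phi_sub_one p ha hx1, ← mul_assoc, ← pow_succ]
    rw [Function.iterate_succ_apply, ih hφx, norm_phi_sub_one p ha hx1, pow_succ, mul_assoc]

lemma image_iterate_phi_closedBall [IsAlgClosed K] (ha : 1 < ‖a‖) (n : ℕ) {x : K} {r : ℝ}
    (hx : ‖a‖ ^ n * ‖x - 1‖ ≤ 1) (hr : ‖a‖ ^ n * r ≤ 1) :
    (phi p a)^[n] '' closedBall x r = closedBall ((phi p a)^[n] x) (‖a‖ ^ n * r) := by
  induction n generalizing x r with
  | zero => simp
  | succ n ih =>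
    have hax := mul_le_one_of_pow_succ_mul_le_one ha.le n hx
    rw [Function.iterate_succ, Set.image_comp, image_phi_closedBall p ha hax
      (mul_le_one_of_pow_succ_mul_le_one ha.le n hr), ih, Function.comp_apply, pow_succ, mul_assoc]
    · rwa [norm_phi_sub_one p ha (lt_one_of_mul_le_one ha hax), ← mul_assoc, ← pow_succ]
    · rwa [← mul_assoc, ← pow_succ]

end Ultrametric

theorem phi_iterate_repelling_disk_general
    {K : Type*} [NontriviallyNormedField K] [IsUltrametricDist K]
    [IsAlgClosed K]
    (p : ℕ)
    (a : K) (ha : 1 < ‖a‖) (M : ℕ) (x : K)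
    (hx : ‖x - 1‖ ≤ ‖a‖ ^ (-(M : ℤ))) :
    ∀ i ≤ M,
      ‖(phi p a)^[i] x - 1‖ = ‖a‖ ^ i * ‖x - 1‖ ∧
      ∀ r : ℝ, 0 < r → r ≤ ‖a‖ ^ (-(M : ℤ)) →
        (phi p a)^[i] '' Metric.closedBall x r =
          Metric.closedBall ((phi p a)^[i] x) (‖a‖ ^ i * r) := by
  intro i hi
  have hscale : ∀ t, t ≤ ‖a‖ ^ (-(M : ℤ)) → ‖a‖ ^ i * t ≤ 1 := fun t ht ↦
    calc ‖a‖ ^ i * t ≤ ‖a‖ ^ i * ‖a‖ ^ (-(M : ℤ)) := by gcongr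
      _ = ‖a‖ ^ ((i : ℤ) - M) := by
        rw [← zpow_natCast, ← zpow_add₀ (by positivity), sub_eq_add_neg]
      _ ≤ 1 := zpow_le_one_of_nonpos₀ ha.le (by omega)
  exact ⟨norm_iterate_phi_sub_one p ha i (hscale _ hx),
    fun r _ hr ↦ image_iterate_phi_closedBall p ha i (hscale _ hx) (hscale r hr)⟩

/-- Lemma on the behavior of iterates of `φ_a` near the repelling fixed point `1`:
for `|x - 1| ≤ |a|^{-M}` and `0 ≤ i ≤ M`, `|φ_a^i(x) - 1| = |a|^i·|x-1|`, and
`φ_a^i(D̄_r(x)) = D̄_{|a|^i r}(φ_a^i(x))` for `0 < r ≤ |a|^{-M}`. -/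
theorem phi_iterate_repelling_disk
    {K : Type*} [NontriviallyNormedField K] [IsUltrametricDist K]
    [CompleteSpace K] [IsAlgClosed K]
    (p : ℕ) (hp : p.Prime) (hpK : ‖(p : K)‖ < 1)
    (a : K) (ha : 1 < ‖a‖) (M : ℕ) (hM : 1 ≤ M) (x : K)
    (hx : ‖x - 1‖ ≤ ‖a‖ ^ (-(M : ℤ))) :
    ∀ i ≤ M,
      ‖(phi p a)^[i] x - 1‖ = ‖a‖ ^ i * ‖x - 1‖ ∧
      ∀ r : ℝ, 0 < r → r ≤ ‖a‖ ^ (-(M : ℤ)) →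
        (phi p a)^[i] '' Metric.closedBall x r =
          Metric.closedBall ((phi p a)^[i] x) (‖a‖ ^ i * r) :=
  phi_iterate_repelling_disk_general p a ha M x hx
end
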